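/- For any real function ρ on R^3 with ρ ∈ L^{6/5}(R^3), the Coulomb energy satisfies D(ρ) ≤ C ‖ρ‖_{L^{6/5}}² for a universal constant C, where D(ρ) = (1/2)∫∫ ρ(x)ρ(y)/|x−y| dx dy. -/

import Mathlib

/-!
Split a set `s` of finite measure at the radius `R = |s|^{1/3}`: off the ball `B(x, R)` the
kernel is at most `1 / R`, and on it a sum over dyadic balls gives
`∫_{B(x, R)} |x - y|⁻¹ dy ≤ 4 |B₁| R²`, so `∫_s |x - y|⁻¹ dy ≤ (1 + 4 |B₁|) |s|^{2/3}`.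
Now dominate `|ρ|` by `∑ⱼ 2^{j+1} 1_{Aⱼ}` with the level sets `Aⱼ = {2^j < |ρ| ≤ 2^{j+1}}`.
For `k ≤ j`, the set estimate for the lower level set gives
`2^{j+k} ∫_{Aⱼ} ∫_{A_k} |x - y|⁻¹ ≤ K 2^{-(j-k)/5} uⱼ u_k^{2/3}` with `uⱼ = 2^{6j/5} |Aⱼ|`,
and the geometric decay in `|j - k|` bounds the double sum by a multiple of
`(∑ⱼ uⱼ)^{5/3} ≤ ‖ρ‖_{6/5}²`.
-/

open MeasureTheory

noncomputable section

abbrev E3 := EuclideanSpace ℝ (Fin 3)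

def coulD (ρ : E3 → ℝ) : ℝ :=
  (1 / 2) * ∫ x, ∫ y, ρ x * ρ y / ‖x - y‖

open Metric Set ENNReal Module Function

section Dyadic

variable {α : Type*}

def dyadicLayer (f : α → ℝ≥0∞) (j : ℤ) : Set α :=
  f ⁻¹' Ioc (2 ^ (j : ℝ)) (2 ^ ((j : ℝ) + 1))

variable {f : α → ℝ≥0∞}

lemma pairwise_disjoint_dyadicLayer : Pairwise (Disjoint on dyadicLayer f) := by
  have key {j k : ℤ} (hjk : j < k) : Disjoint (dyadicLayer f j) (dyadicLayer f k) := by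
    refine Set.disjoint_left.2 fun x hj hk ↦ (hk.1.trans_le hj.2).not_ge ?_
    exact ENNReal.rpow_le_rpow_of_exponent_le one_le_two (by exact_mod_cast hjk)
  intro j k hjk
  rcases hjk.lt_or_gt with h | h
  exacts [key h, (key h).symm]

lemma le_tsum_indicator_dyadicLayer {x : α} (hx : f x ≠ ∞) :
    f x ≤ ∑' j : ℤ, (dyadicLayer f j).indicator (fun _ ↦ 2 ^ ((j : ℝ) + 1)) x := by
  rcases eq_or_ne (f x) 0 with h0 | h0
  · simp [h0]
  obtain ⟨j, hj⟩ := ENNReal.exists_mem_Ioc_zpow h0 hx one_lt_two ofNat_ne_top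
  have hmem : x ∈ dyadicLayer f j := by
    simpa [dyadicLayer, ← ENNReal.rpow_intCast] using hj
  refine le_trans ?_ (ENNReal.le_tsum j)
  rw [indicator_of_mem hmem]
  exact hmem.2

variable [MeasurableSpace α]

lemma measurableSet_dyadicLayer (hf : Measurable f) (j : ℤ) : MeasurableSet (dyadicLayer f j) :=
  hf measurableSet_Ioc

lemma tsum_rpow_mul_measure_dyadicLayer_le (μ : Measure α) (hf : Measurable f) {p : ℝ}
    (hp : 0 ≤ p) :
    ∑' j : ℤ, (2 ^ (j : ℝ)) ^ p * μ (dyadicLayer f j) ≤ ∫⁻ x, f x ^ p ∂μ := by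
  calc ∑' j : ℤ, (2 ^ (j : ℝ)) ^ p * μ (dyadicLayer f j)
      ≤ ∑' j : ℤ, ∫⁻ x in dyadicLayer f j, f x ^ p ∂μ := by
        refine ENNReal.tsum_le_tsum fun j ↦ ?_
        rw [← setLIntegral_const]
        exact setLIntegral_mono (hf.pow_const p) fun x hx ↦ ENNReal.rpow_le_rpow hx.1.le hp
    _ = ∫⁻ x in ⋃ j, dyadicLayer f j, f x ^ p ∂μ :=
        (lintegral_iUnion (measurableSet_dyadicLayer hf) pairwise_disjoint_dyadicLayer _).symm
    _ ≤ ∫⁻ x, f x ^ p ∂μ := setLIntegral_le_lintegral _ _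

end Dyadic

section DiscreteSums

lemma tsum_pow_natAbs_le (q : ℝ≥0∞) : ∑' m : ℤ, q ^ m.natAbs ≤ 2 * (1 - q)⁻¹ := by
  rcases le_or_gt 1 q with hq | hq
  · simp [tsub_eq_zero_of_le hq]
  rw [tsum_of_nat_of_neg_add_one ENNReal.summable ENNReal.summable, two_mul]
  refine add_le_add (by simp [ENNReal.tsum_geometric]) ?_
  calc ∑' n : ℕ, q ^ (-((n : ℤ) + 1)).natAbs = ∑' n : ℕ, q ^ (n + 1) := by
        congr! 2 with n
    _ ≤ ∑' n : ℕ, q ^ n :=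
        ENNReal.tsum_le_tsum fun n ↦ pow_le_pow_of_le_one zero_le hq.le n.le_succ
    _ = (1 - q)⁻¹ := ENNReal.tsum_geometric q

lemma tsum_prod_pow_natAbs_sub_mul_add_le (q : ℝ≥0∞) (u : ℤ → ℝ≥0∞) :
    ∑' jk : ℤ × ℤ, q ^ (jk.1 - jk.2).natAbs * (u jk.1 + u jk.2) ≤
      4 * (1 - q)⁻¹ * ∑' j, u j := by
  have hshift (j : ℤ) : ∑' k : ℤ, q ^ (j - k).natAbs ≤ 2 * (1 - q)⁻¹ :=
    ((Equiv.subLeft j).tsum_eq (fun m ↦ q ^ m.natAbs)).trans_le (tsum_pow_natAbs_le q)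
  have hhalf :
      ∑' jk : ℤ × ℤ, q ^ (jk.1 - jk.2).natAbs * u jk.1 ≤ 2 * (1 - q)⁻¹ * ∑' j, u j := by
    rw [ENNReal.tsum_prod', ← ENNReal.tsum_mul_left]
    refine ENNReal.tsum_le_tsum fun j ↦ ?_
    dsimp only
    rw [ENNReal.tsum_mul_right]
    gcongr
    exact hshift j
  have hswap : ∑' jk : ℤ × ℤ, q ^ (jk.1 - jk.2).natAbs * u jk.2 =
      ∑' jk : ℤ × ℤ, q ^ (jk.1 - jk.2).natAbs * u jk.1 := by
    rw [← (Equiv.prodComm ℤ ℤ).tsum_eq]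
    congr! 3 with jk
    simp only [Equiv.prodComm_apply, Prod.fst_swap, Prod.snd_swap]
    rw [← Int.natAbs_neg, neg_sub]
  calc ∑' jk : ℤ × ℤ, q ^ (jk.1 - jk.2).natAbs * (u jk.1 + u jk.2)
      = 2 * ∑' jk : ℤ × ℤ, q ^ (jk.1 - jk.2).natAbs * u jk.1 := by
        simp_rw [mul_add]
        rw [ENNReal.tsum_add, hswap, two_mul]
    _ ≤ 2 * (2 * (1 - q)⁻¹ * ∑' j, u j) := by gcongr
    _ = 4 * (1 - q)⁻¹ * ∑' j, u j := by ring

lemma two_rpow_mul_two_rpow_mul_eq {p θ : ℝ} (hθ : 0 ≤ θ) (hp : p * (1 + θ) = 2) {j k : ℤ}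
    (hkj : k ≤ j) (a b : ℝ≥0∞) :
    2 ^ ((j : ℝ) + 1) * 2 ^ ((k : ℝ) + 1) * (a * b ^ θ) =
      4 * (2 ^ (1 - p)) ^ (j - k).natAbs *
        ((2 ^ (j : ℝ)) ^ p * a * ((2 ^ (k : ℝ)) ^ p * b) ^ θ) := by
  have hadd (s t : ℝ) : (2 : ℝ≥0∞) ^ s * 2 ^ t = 2 ^ (s + t) :=
    (ENNReal.rpow_add s t two_ne_zero ofNat_ne_top).symm
  have hjk : ((j - k).natAbs : ℝ) = j - k := by
    rw [Nat.cast_natAbs, abs_of_nonneg (by exact_mod_cast sub_nonneg.2 hkj), Int.cast_sub]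
  rw [ENNReal.mul_rpow_of_nonneg _ _ hθ, ← ENNReal.rpow_natCast, ← ENNReal.rpow_mul,
    ← ENNReal.rpow_mul, ← ENNReal.rpow_mul, ← ENNReal.rpow_mul, hjk,
    show (4 : ℝ≥0∞) = 2 ^ (2 : ℝ) by norm_num]
  calc 2 ^ ((j : ℝ) + 1) * 2 ^ ((k : ℝ) + 1) * (a * b ^ θ)
      = 2 ^ (2 + (1 - p) * (j - k) + (j * p + k * p * θ)) * (a * b ^ θ) := by
        rw [hadd]
        congr 2
        linear_combination (-k : ℝ) * hp
    _ = _ := by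
        rw [← hadd, ← hadd, ← hadd]
        ring_nf

lemma tsum_dyadic_bilinear_le {p θ : ℝ} (hθ : 0 ≤ θ) (hp : p * (1 + θ) = 2) (K : ℝ≥0∞)
    (a : ℤ → ℝ≥0∞) (T : ℤ → ℤ → ℝ≥0∞) (hT : ∀ j k, k ≤ j → T j k ≤ K * (a j * a k ^ θ))
    (hT_symm : ∀ j k, T j k = T k j) :
    ∑' jk : ℤ × ℤ, 2 ^ ((jk.1 : ℝ) + 1) * 2 ^ ((jk.2 : ℝ) + 1) * T jk.1 jk.2 ≤
      16 * K * (1 - 2 ^ (1 - p))⁻¹ * (∑' j : ℤ, (2 ^ (j : ℝ)) ^ p * a j) ^ (1 + θ) := by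
  set q : ℝ≥0∞ := 2 ^ (1 - p)
  set u : ℤ → ℝ≥0∞ := fun j ↦ (2 ^ (j : ℝ)) ^ p * a j
  set U := ∑' j, u j
  have hpair (j k : ℤ) : 2 ^ ((j : ℝ) + 1) * 2 ^ ((k : ℝ) + 1) * T j k ≤
      4 * K * U ^ θ * (q ^ (j - k).natAbs * (u j + u k)) := by
    wlog hkj : k ≤ j generalizing j k
    · rw [hT_symm, mul_comm (2 ^ ((j : ℝ) + 1)), ← Int.natAbs_neg, neg_sub, add_comm (u j)]
      exact this k j (le_of_not_ge hkj)
    calc 2 ^ ((j : ℝ) + 1) * 2 ^ ((k : ℝ) + 1) * T j k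
        ≤ 2 ^ ((j : ℝ) + 1) * 2 ^ ((k : ℝ) + 1) * (K * (a j * a k ^ θ)) := by
          gcongr; exact hT j k hkj
      _ = 4 * K * (q ^ (j - k).natAbs * (u j * u k ^ θ)) := by
          rw [mul_left_comm, two_rpow_mul_two_rpow_mul_eq hθ hp hkj]
          ring
      _ ≤ 4 * K * (q ^ (j - k).natAbs * (u j * U ^ θ)) := by
          gcongr; exact ENNReal.le_tsum k
      _ = 4 * K * U ^ θ * (q ^ (j - k).natAbs * u j) := by ring
      _ ≤ 4 * K * U ^ θ * (q ^ (j - k).natAbs * (u j + u k)) := by gcongr; exact le_self_add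
  calc ∑' jk : ℤ × ℤ, 2 ^ ((jk.1 : ℝ) + 1) * 2 ^ ((jk.2 : ℝ) + 1) * T jk.1 jk.2
      ≤ ∑' jk : ℤ × ℤ, 4 * K * U ^ θ * (q ^ (jk.1 - jk.2).natAbs * (u jk.1 + u jk.2)) :=
        ENNReal.tsum_le_tsum fun jk ↦ hpair jk.1 jk.2
    _ ≤ 4 * K * U ^ θ * (4 * (1 - q)⁻¹ * U) := by
        rw [ENNReal.tsum_mul_left]
        gcongr
        exact tsum_prod_pow_natAbs_sub_mul_add_le q u
    _ = 16 * K * (1 - q)⁻¹ * U ^ (1 + θ) := by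
        rw [ENNReal.rpow_add_of_nonneg _ _ zero_le_one hθ, ENNReal.rpow_one]
        ring

end DiscreteSums

section Kernel

variable {α : Type*} [MeasurableSpace α] {μ : Measure α} {k : α → α → ℝ≥0∞}

lemma setLIntegral_setLIntegral_le_of_setLIntegral_le {K : ℝ≥0∞} {θ : ℝ}
    (hk : ∀ x s, MeasurableSet s → ∫⁻ y in s, k x y ∂μ ≤ K * μ s ^ θ) (A : Set α) {B : Set α}
    (hB : MeasurableSet B) :
    ∫⁻ x in A, ∫⁻ y in B, k x y ∂μ ∂μ ≤ K * (μ A * μ B ^ θ) := by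
  calc ∫⁻ x in A, ∫⁻ y in B, k x y ∂μ ∂μ ≤ ∫⁻ _ in A, K * μ B ^ θ ∂μ :=
        lintegral_mono fun x ↦ hk x B hB
    _ = K * (μ A * μ B ^ θ) := by rw [setLIntegral_const]; ring

variable [SFinite μ]

lemma setLIntegral_setLIntegral_comm (hk_meas : Measurable (uncurry k))
    (hk_symm : ∀ x y, k x y = k y x) (A B : Set α) :
    ∫⁻ x in A, ∫⁻ y in B, k x y ∂μ ∂μ = ∫⁻ x in B, ∫⁻ y in A, k x y ∂μ ∂μ := by
  rw [lintegral_lintegral_swap hk_meas.aemeasurable]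
  simp_rw [hk_symm]

lemma lintegral_lintegral_indicator_mul_indicator_mul (hk_meas : Measurable (uncurry k))
    {A B : Set α} (hA : MeasurableSet A) (hB : MeasurableSet B) (c d : ℝ≥0∞) :
    ∫⁻ x, ∫⁻ y, A.indicator (fun _ ↦ c) x * B.indicator (fun _ ↦ d) y * k x y ∂μ ∂μ =
      c * d * ∫⁻ x in A, ∫⁻ y in B, k x y ∂μ ∂μ := by
  have hinner (x : α) :
      ∫⁻ y, A.indicator (fun _ ↦ c) x * B.indicator (fun _ ↦ d) y * k x y ∂μ =
        A.indicator (fun x ↦ c * d * ∫⁻ y in B, k x y ∂μ) x := by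
    by_cases hx : x ∈ A
    · have hkx : Measurable (k x) := hk_meas.of_uncurry_left
      simp_rw [indicator_of_mem hx, mul_assoc, ← indicator_mul_left]
      rw [lintegral_const_mul _ ((hkx.const_mul d).indicator hB),
        lintegral_indicator hB, lintegral_const_mul _ hkx]
    · simp [hx]
  simp_rw [hinner]
  rw [lintegral_indicator hA, lintegral_const_mul _ ?_]
  exact hk_meas.lintegral_prod_right'

lemma lintegral_lintegral_le_tsum_dyadicLayer (hk_meas : Measurable (uncurry k))
    {f : α → ℝ≥0∞} (hf : Measurable f) (hfin : ∀ᵐ x ∂μ, f x ≠ ∞) :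
    ∫⁻ x, ∫⁻ y, f x * f y * k x y ∂μ ∂μ ≤
      ∑' jk : ℤ × ℤ, 2 ^ ((jk.1 : ℝ) + 1) * 2 ^ ((jk.2 : ℝ) + 1) *
        ∫⁻ x in dyadicLayer f jk.1, ∫⁻ y in dyadicLayer f jk.2, k x y ∂μ ∂μ := by
  set g : ℤ → α → ℝ≥0∞ := fun j ↦ (dyadicLayer f j).indicator fun _ ↦ 2 ^ ((j : ℝ) + 1)
  have hg (j : ℤ) : Measurable (g j) :=
    measurable_const.indicator (measurableSet_dyadicLayer hf j)
  have hgk (jk : ℤ × ℤ) : Measurable (uncurry fun x y ↦ g jk.1 x * g jk.2 y * k x y) :=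
    ((hg jk.1).comp measurable_fst).mul ((hg jk.2).comp measurable_snd) |>.mul hk_meas
  calc ∫⁻ x, ∫⁻ y, f x * f y * k x y ∂μ ∂μ
      ≤ ∫⁻ x, ∫⁻ y, ∑' jk : ℤ × ℤ, g jk.1 x * g jk.2 y * k x y ∂μ ∂μ := by
        refine lintegral_mono_ae ?_
        filter_upwards [hfin] with x hx
        refine lintegral_mono_ae ?_
        filter_upwards [hfin] with y hy
        calc f x * f y * k x y ≤ (∑' j, g j x) * (∑' j, g j y) * k x y := by
              gcongr <;> exact le_tsum_indicator_dyadicLayer ‹_›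
          _ = ∑' jk : ℤ × ℤ, g jk.1 x * g jk.2 y * k x y := by
              rw [ENNReal.tsum_prod']
              simp only [ENNReal.tsum_mul_right, ENNReal.tsum_mul_left]
    _ = ∑' jk : ℤ × ℤ, ∫⁻ x, ∫⁻ y, g jk.1 x * g jk.2 y * k x y ∂μ ∂μ := by
        simp_rw [lintegral_tsum fun jk ↦ (hgk jk).of_uncurry_left.aemeasurable]
        exact lintegral_tsum fun jk ↦ (hgk jk).lintegral_prod_right'.aemeasurable
    _ = _ := by
        refine tsum_congr fun jk ↦ ?_
        exact lintegral_lintegral_indicator_mul_indicator_mul hk_meas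
          (measurableSet_dyadicLayer hf _) (measurableSet_dyadicLayer hf _) _ _

theorem lintegral_lintegral_mul_mul_le_of_setLIntegral_le {K : ℝ≥0∞} {p θ : ℝ} (hθ : 0 ≤ θ)
    (hp : p * (1 + θ) = 2) (hk_meas : Measurable (uncurry k)) (hk_symm : ∀ x y, k x y = k y x)
    (hk : ∀ x s, MeasurableSet s → ∫⁻ y in s, k x y ∂μ ≤ K * μ s ^ θ) {f : α → ℝ≥0∞}
    (hf : AEMeasurable f μ) (hfin : ∀ᵐ x ∂μ, f x ≠ ∞) :
    ∫⁻ x, ∫⁻ y, f x * f y * k x y ∂μ ∂μ ≤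
      16 * K * (1 - 2 ^ (1 - p))⁻¹ * (∫⁻ x, f x ^ p ∂μ) ^ (1 + θ) := by
  set g := hf.mk f
  have hfg : f =ᵐ[μ] g := hf.ae_eq_mk
  have hp0 : 0 ≤ p := by nlinarith
  set T : ℤ → ℤ → ℝ≥0∞ := fun j j' ↦
    ∫⁻ x in dyadicLayer g j, ∫⁻ y in dyadicLayer g j', k x y ∂μ ∂μ
  have hT (j j' : ℤ) (_ : j' ≤ j) :
      T j j' ≤ K * (μ (dyadicLayer g j) * μ (dyadicLayer g j') ^ θ) :=
    setLIntegral_setLIntegral_le_of_setLIntegral_le hk _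
      (measurableSet_dyadicLayer hf.measurable_mk j')
  have hT_symm (j j' : ℤ) : T j j' = T j' j :=
    setLIntegral_setLIntegral_comm hk_meas hk_symm _ _
  calc ∫⁻ x, ∫⁻ y, f x * f y * k x y ∂μ ∂μ = ∫⁻ x, ∫⁻ y, g x * g y * k x y ∂μ ∂μ := by
        refine lintegral_congr_ae ?_
        filter_upwards [hfg] with x hx
        rw [hx]
        refine lintegral_congr_ae ?_
        filter_upwards [hfg] with y hy
        rw [hy]
    _ ≤ ∑' jk : ℤ × ℤ, 2 ^ ((jk.1 : ℝ) + 1) * 2 ^ ((jk.2 : ℝ) + 1) * T jk.1 jk.2 :=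
        lintegral_lintegral_le_tsum_dyadicLayer hk_meas hf.measurable_mk
          (by filter_upwards [hfg, hfin] with x hx hx'; rwa [← hx])
    _ ≤ 16 * K * (1 - 2 ^ (1 - p))⁻¹ *
          (∑' j : ℤ, (2 ^ (j : ℝ)) ^ p * μ (dyadicLayer g j)) ^ (1 + θ) :=
        tsum_dyadic_bilinear_le hθ hp K _ T hT hT_symm
    _ ≤ 16 * K * (1 - 2 ^ (1 - p))⁻¹ * (∫⁻ x, g x ^ p ∂μ) ^ (1 + θ) := by
        gcongr
        exact tsum_rpow_mul_measure_dyadicLayer_le μ hf.measurable_mk hp0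
    _ = 16 * K * (1 - 2 ^ (1 - p))⁻¹ * (∫⁻ x, f x ^ p ∂μ) ^ (1 + θ) := by
        have hfg_pow : (fun x ↦ f x ^ p) =ᵐ[μ] fun x ↦ g x ^ p :=
          hfg.mono fun x hx ↦ by simp only [hx]
        rw [lintegral_congr_ae hfg_pow]

end Kernel

section Geometry

variable {E : Type*} [NormedAddCommGroup E]

lemma inv_enorm_sub_le_tsum_indicator_closedBall {x y : E} {r : ℝ} (hy : y ∈ ball x r)
    (hyx : y ≠ x) :
    ‖x - y‖ₑ⁻¹ ≤ ∑' n : ℕ,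
      (closedBall x (r / 2 ^ n)).indicator (fun _ ↦ ENNReal.ofReal (2 ^ (n + 1) / r)) y := by
  have hpos : 0 < ‖x - y‖ := norm_pos_iff.2 (sub_ne_zero.2 hyx.symm)
  have hr : ‖x - y‖ < r := by rwa [mem_ball, dist_eq_norm, norm_sub_rev] at hy
  obtain ⟨n, hn, hn'⟩ := exists_nat_pow_near (one_le_div hpos |>.2 hr.le) one_lt_two
  rw [le_div_iff₀ hpos] at hn
  rw [div_lt_iff₀ hpos] at hn'
  have hmem : y ∈ closedBall x (r / 2 ^ n) := by
    rw [mem_closedBall, dist_eq_norm, norm_sub_rev, le_div_iff₀ (by positivity)]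
    linarith
  refine le_trans ?_ (ENNReal.le_tsum n)
  rw [indicator_of_mem hmem, ← ofReal_norm, ← ENNReal.ofReal_inv_of_pos hpos]
  refine ENNReal.ofReal_le_ofReal ?_
  rw [inv_le_iff_one_le_mul₀ hpos, div_mul_eq_mul_div, le_div_iff₀ (hpos.trans hr)]
  linarith

lemma setLIntegral_diff_ball_inv_enorm_sub_le [MeasurableSpace E] (μ : Measure E) (x : E)
    (s : Set E) (R : ℝ) :
    ∫⁻ y in s \ ball x R, ‖x - y‖ₑ⁻¹ ∂μ ≤ (ENNReal.ofReal R)⁻¹ * μ s := by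
  calc ∫⁻ y in s \ ball x R, ‖x - y‖ₑ⁻¹ ∂μ
      ≤ ∫⁻ _ in s \ ball x R, (ENNReal.ofReal R)⁻¹ ∂μ := by
        refine setLIntegral_mono measurable_const fun y hy ↦ ?_
        have hRy : R ≤ ‖x - y‖ := by simpa [dist_eq_norm, norm_sub_rev] using hy.2
        rw [← ofReal_norm]
        exact ENNReal.inv_le_inv.2 (ENNReal.ofReal_le_ofReal hRy)
    _ ≤ (ENNReal.ofReal R)⁻¹ * μ s := by
        rw [setLIntegral_const]
        gcongr
        exact sdiff_subset

variable [NormedSpace ℝ E] [FiniteDimensional ℝ E] [MeasurableSpace E] [BorelSpace E]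
  (μ : Measure E) [μ.IsAddHaarMeasure]

lemma setLIntegral_ball_inv_enorm_sub_le (hE : 2 ≤ finrank ℝ E) (x : E) {r : ℝ} (hr : 0 < r) :
    ∫⁻ y in ball x r, ‖x - y‖ₑ⁻¹ ∂μ ≤
      ENNReal.ofReal (4 * r ^ (finrank ℝ E - 1)) * μ (ball 0 1) := by
  obtain ⟨d, hd⟩ : ∃ d, finrank ℝ E = d + 2 := ⟨_, (Nat.sub_add_cancel hE).symm⟩
  have : Nontrivial E := Module.nontrivial_of_finrank_pos (R := ℝ) (by omega)
  have hterm (n : ℕ) :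
      2 ^ (n + 1) / r * (r / 2 ^ n) ^ (d + 2) ≤ 2 * r ^ (d + 1) * (1 / 2) ^ n := by
    calc 2 ^ (n + 1) / r * (r / 2 ^ n) ^ (d + 2) = 2 * r ^ (d + 1) / 2 ^ (n * (d + 1)) := by
          rw [div_pow, ← pow_mul, div_mul_div_comm,
            div_eq_div_iff (by positivity) (by positivity)]
          ring
      _ ≤ 2 * r ^ (d + 1) / 2 ^ n := by
          gcongr
          · norm_num
          · exact Nat.le_mul_of_pos_right n d.succ_pos
      _ = 2 * r ^ (d + 1) * (1 / 2) ^ n := by rw [one_div_pow, mul_one_div]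
  calc ∫⁻ y in ball x r, ‖x - y‖ₑ⁻¹ ∂μ
      ≤ ∫⁻ y in ball x r, ∑' n : ℕ, (closedBall x (r / 2 ^ n)).indicator
          (fun _ ↦ ENNReal.ofReal (2 ^ (n + 1) / r)) y ∂μ := by
        refine setLIntegral_mono_ae' measurableSet_ball ?_
        filter_upwards [μ.ae_ne x] with y hyx hy
        exact inv_enorm_sub_le_tsum_indicator_closedBall hy hyx
    _ ≤ ∑' n : ℕ, ENNReal.ofReal (2 ^ (n + 1) / r) * μ (closedBall x (r / 2 ^ n)) := by
        refine (setLIntegral_le_lintegral _ _).trans_eq ?_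
        rw [lintegral_tsum fun n ↦
          (measurable_const.indicator measurableSet_closedBall).aemeasurable]
        simp_rw [lintegral_indicator_const measurableSet_closedBall]
    _ ≤ ∑' n : ℕ, ENNReal.ofReal (2 * r ^ (d + 1) * (1 / 2) ^ n) * μ (ball 0 1) := by
        refine ENNReal.tsum_le_tsum fun n ↦ ?_
        rw [Measure.addHaar_closedBall μ x (by positivity), hd, ← mul_assoc,
          ← ENNReal.ofReal_mul (by positivity)]
        exact mul_le_mul_left (ENNReal.ofReal_le_ofReal (hterm n)) _
    _ = ENNReal.ofReal (4 * r ^ (finrank ℝ E - 1)) * μ (ball 0 1) := by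
        rw [ENNReal.tsum_mul_right, ← ENNReal.ofReal_tsum_of_nonneg (fun n ↦ by positivity)
          (summable_geometric_two.mul_left _), tsum_mul_left, tsum_geometric_two, hd,
          show d + 2 - 1 = d + 1 by omega]
        ring_nf

lemma setLIntegral_inv_enorm_sub_le (hE : 2 ≤ finrank ℝ E) (x : E) (s : Set E) :
    ∫⁻ y in s, ‖x - y‖ₑ⁻¹ ∂μ ≤ (1 + 4 * μ (ball 0 1)) * μ s ^ (1 - (finrank ℝ E : ℝ)⁻¹) := by
  set d := finrank ℝ E
  have hd : (2 : ℝ) ≤ d := by exact_mod_cast hE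
  have hθ : 0 < 1 - (d : ℝ)⁻¹ := by
    rw [sub_pos]; exact inv_lt_one_of_one_lt₀ (by linarith)
  rcases eq_or_ne (μ s) 0 with hs0 | hs0
  · simp [Measure.restrict_eq_zero.2 hs0]
  rcases eq_or_ne (μ s) ∞ with hs | hs
  · rw [hs, ENNReal.top_rpow_of_pos hθ, ENNReal.mul_top (by simp)]
    exact le_top
  set β := (μ s).toReal
  have hβ : 0 < β := ENNReal.toReal_pos hs0 hs
  have hsβ : μ s = ENNReal.ofReal β := (ENNReal.ofReal_toReal hs).symm
  set R := β ^ (d : ℝ)⁻¹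
  have hR : 0 < R := Real.rpow_pos_of_pos hβ _
  have hβR : β / R = β ^ (1 - (d : ℝ)⁻¹) := by rw [Real.rpow_sub hβ, Real.rpow_one]
  have hRpow : R ^ (d - 1) = β ^ (1 - (d : ℝ)⁻¹) := by
    rw [← Real.rpow_mul_natCast hβ.le, Nat.cast_sub (by omega), Nat.cast_one]
    congr 1
    field_simp
  calc ∫⁻ y in s, ‖x - y‖ₑ⁻¹ ∂μ
      ≤ ∫⁻ y in (s \ ball x R) ∪ ball x R, ‖x - y‖ₑ⁻¹ ∂μ :=
        lintegral_mono_set fun y hy ↦ by by_cases h : y ∈ ball x R <;> simp [hy, h]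
    _ ≤ ∫⁻ y in s \ ball x R, ‖x - y‖ₑ⁻¹ ∂μ + ∫⁻ y in ball x R, ‖x - y‖ₑ⁻¹ ∂μ :=
        lintegral_union_le _ _ _
    _ ≤ (ENNReal.ofReal R)⁻¹ * μ s + ENNReal.ofReal (4 * R ^ (d - 1)) * μ (ball 0 1) :=
        add_le_add (setLIntegral_diff_ball_inv_enorm_sub_le μ x s R)
          (setLIntegral_ball_inv_enorm_sub_le μ hE x hR)
    _ = (1 + 4 * μ (ball 0 1)) * μ s ^ (1 - (d : ℝ)⁻¹) := by
        rw [hsβ, mul_comm (ENNReal.ofReal R)⁻¹, ← div_eq_mul_inv,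
          ← ENNReal.ofReal_div_of_pos hR, ENNReal.ofReal_mul (by norm_num), hβR, hRpow,
          ENNReal.ofReal_rpow_of_pos hβ, ENNReal.ofReal_ofNat]
        ring

theorem lintegral_lintegral_mul_mul_inv_enorm_sub_le (hE : 2 ≤ finrank ℝ E) {p : ℝ}
    (hp : p * (2 - (finrank ℝ E : ℝ)⁻¹) = 2) {f : E → ℝ≥0∞} (hf : AEMeasurable f μ)
    (hfin : ∀ᵐ x ∂μ, f x ≠ ∞) :
    ∫⁻ x, ∫⁻ y, f x * f y * ‖x - y‖ₑ⁻¹ ∂μ ∂μ ≤ 16 * (1 + 4 * μ (ball 0 1)) *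
      (1 - 2 ^ (1 - p))⁻¹ * (∫⁻ x, f x ^ p ∂μ) ^ (2 - (finrank ℝ E : ℝ)⁻¹) := by
  have hθ : 0 ≤ 1 - (finrank ℝ E : ℝ)⁻¹ :=
    sub_nonneg.2 (inv_le_one_of_one_le₀ (by exact_mod_cast (by omega : 1 ≤ finrank ℝ E)))
  have hk_meas : Measurable (uncurry fun x y : E ↦ ‖x - y‖ₑ⁻¹) :=
    (measurable_fst.sub measurable_snd).enorm.inv
  convert lintegral_lintegral_mul_mul_le_of_setLIntegral_le (p := p) hθ
    (by linear_combination hp) hk_meas (fun x y ↦ by rw [enorm_sub_rev])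
    (fun x s _ ↦ setLIntegral_inv_enorm_sub_le μ hE x s) hf hfin using 3
  ring

end Geometry

lemma integral_integral_le_toReal_lintegral_lintegral {α β : Type*} [MeasurableSpace α]
    [MeasurableSpace β] {μ : Measure α} {ν : Measure β} (F : α → β → ℝ)
    (hF : ∫⁻ x, ∫⁻ y, ‖F x y‖ₑ ∂ν ∂μ ≠ ∞) :
    ∫ x, ∫ y, F x y ∂ν ∂μ ≤ (∫⁻ x, ∫⁻ y, ‖F x y‖ₑ ∂ν ∂μ).toReal := by
  calc ∫ x, ∫ y, F x y ∂ν ∂μ ≤ ‖∫ x, ∫ y, F x y ∂ν ∂μ‖ := Real.le_norm_self _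
    _ = ‖∫ x, ∫ y, F x y ∂ν ∂μ‖ₑ.toReal := (toReal_enorm _).symm
    _ ≤ (∫⁻ x, ∫⁻ y, ‖F x y‖ₑ ∂ν ∂μ).toReal := by
        refine ENNReal.toReal_mono hF ((enorm_integral_le_lintegral_enorm _).trans ?_)
        exact lintegral_mono fun x ↦ enorm_integral_le_lintegral_enorm _

lemma enorm_div_le_mul_inv {𝕜 : Type*} [NormedDivisionRing 𝕜] (a b : 𝕜) :
    ‖a / b‖ₑ ≤ ‖a‖ₑ * ‖b‖ₑ⁻¹ := by
  rcases eq_or_ne b 0 with rfl | hb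
  · simp
  · rw [div_eq_mul_inv, enorm_mul, enorm_inv hb]

def coulombHLSConst : ℝ≥0∞ :=
  16 * (1 + 4 * volume (ball (0 : E3) 1)) * (1 - 2 ^ (1 - 6 / 5 : ℝ))⁻¹

lemma coulombHLSConst_ne_zero : coulombHLSConst ≠ 0 := by
  refine mul_ne_zero (mul_ne_zero (by norm_num) (by simp)) (ENNReal.inv_ne_zero.2 ?_)
  exact ne_top_of_le_ne_top one_ne_top tsub_le_self

lemma coulombHLSConst_ne_top : coulombHLSConst ≠ ∞ := by
  have hq : (2 : ℝ≥0∞) ^ (1 - 6 / 5 : ℝ) < 1 :=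
    ENNReal.rpow_lt_one_of_one_lt_of_neg one_lt_two (by norm_num)
  refine mul_ne_top (mul_ne_top (by norm_num) ?_) (ENNReal.inv_ne_top.2 (tsub_pos_of_lt hq).ne')
  exact add_ne_top.2 ⟨one_ne_top, mul_ne_top ofNat_ne_top measure_ball_lt_top.ne⟩

lemma lintegral_lintegral_enorm_coulomb_le {ρ : E3 → ℝ} (hρ : AEStronglyMeasurable ρ volume) :
    ∫⁻ x, ∫⁻ y, ‖ρ x * ρ y / ‖x - y‖‖ₑ ≤ coulombHLSConst * eLpNorm ρ (6 / 5) volume ^ 2 := by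
  have hdim : finrank ℝ E3 = 3 := finrank_euclideanSpace_fin
  calc ∫⁻ x, ∫⁻ y, ‖ρ x * ρ y / ‖x - y‖‖ₑ
      ≤ ∫⁻ x, ∫⁻ y, ‖ρ x‖ₑ * ‖ρ y‖ₑ * ‖x - y‖ₑ⁻¹ := by
        refine lintegral_mono fun x ↦ lintegral_mono fun y ↦ ?_
        simpa only [enorm_mul, enorm_norm] using enorm_div_le_mul_inv (ρ x * ρ y) ‖x - y‖
    _ ≤ coulombHLSConst * (∫⁻ x, ‖ρ x‖ₑ ^ (6 / 5 : ℝ)) ^ (2 - (3 : ℝ)⁻¹) := by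
        have := lintegral_lintegral_mul_mul_inv_enorm_sub_le volume (by rw [hdim]; norm_num)
          (p := 6 / 5) (by rw [hdim]; norm_num) hρ.enorm (ae_of_all _ fun _ ↦ enorm_ne_top)
        rwa [hdim, Nat.cast_ofNat] at this
    _ = coulombHLSConst * eLpNorm ρ (6 / 5) volume ^ 2 := by
        rw [eLpNorm_eq_lintegral_rpow_enorm_toReal (by norm_num)
          (div_ne_top ofNat_ne_top (by norm_num)), ← ENNReal.rpow_natCast, ← ENNReal.rpow_mul]
        norm_num

/-- Hardy–Littlewood–Sobolev bound on the Coulomb energy: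
`D(ρ) ≤ C ‖ρ‖_{L^{6/5}}²` with a universal constant `C`. -/
theorem coulD_le_HLS :
    ∃ C > (0 : ℝ), ∀ ρ : E3 → ℝ, MemLp ρ (6 / 5) volume →
      coulD ρ ≤ C * (eLpNorm ρ (6 / 5) volume).toReal ^ 2 := by
  have hC := ENNReal.toReal_pos coulombHLSConst_ne_zero coulombHLSConst_ne_top
  refine ⟨coulombHLSConst.toReal / 2, by positivity, fun ρ hρ ↦ ?_⟩
  have hbound := lintegral_lintegral_enorm_coulomb_le hρ.aestronglyMeasurable
  have hfin : coulombHLSConst * eLpNorm ρ (6 / 5) volume ^ 2 ≠ ∞ :=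
    mul_ne_top coulombHLSConst_ne_top (pow_ne_top hρ.eLpNorm_ne_top)
  calc coulD ρ
      ≤ 1 / 2 * (∫⁻ x, ∫⁻ y, ‖ρ x * ρ y / ‖x - y‖‖ₑ).toReal := by
        unfold coulD
        gcongr
        exact integral_integral_le_toReal_lintegral_lintegral _ (ne_top_of_le_ne_top hfin hbound)
    _ ≤ 1 / 2 * (coulombHLSConst * eLpNorm ρ (6 / 5) volume ^ 2).toReal :=
        mul_le_mul_of_nonneg_left (ENNReal.toReal_mono hfin hbound) (by norm_num)
    _ = coulombHLSConst.toReal / 2 * (eLpNorm ρ (6 / 5) volume).toReal ^ 2 := by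
        rw [toReal_mul, toReal_pow]
        ring
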